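/- arXiv:1310.8280 — 5 statements merged into one kernel-verified Lean document; each statement's English description precedes it below -/
import Mathlib

section
/- Let m ≥ 1. The space of complex symmetric m×m matrices A satisfying ∏_{k=1}^{m} det(A^{(k)}) = 1 (with the subspace topology from the space of m×m complex matrices) is homotopy equivalent to the (m-1)-torus (S¹)^{m-1}. (This space is the global Milnor fiber of the determinantal arrangement defined by ∏_{k=1}^{m} det(A^{(k)}) = 0 on the space of symmetric matrices.) -/
/-!
Eliminate one pivot at a time. A symmetric matrix `A` with `α = A₀₀ ≠ 0` is uniquely
`[[α, α cᵀ], [α c, B + α c cᵀ]] = [[1, 0], [c, 1]] * [[α, α cᵀ], [0, B]]` with `B` symmetric,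
and then `det A^(k+1) = α * det B^(k)`. Hence the space of pairs `(x, A)`, `A` symmetric of size
`n + 1` with `f x * ∏ₖ det A^(k) = 1`, is homeomorphic to `ℂⁿ` times the analogous space for
size `n` and the function `(α, x) ↦ α^(n+1) * f x`. For `1 × 1` matrices the entry is forced to
be `(f x)⁻¹`. Starting from `f = 1` on a point, the Milnor fiber is therefore homeomorphic to a
vector space times `(ℂ ∖ {0})^(m-1)`, which deformation retracts onto `(S¹)^(m-1)`.
-/

open Matrix ContinuousMap

namespace Matrix

variable {R : Type*} {n : ℕ}

def blockCons (a : R) (r c : Fin n → R) (B : Matrix (Fin n) (Fin n) R) :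
    Matrix (Fin (n + 1)) (Fin (n + 1)) R :=
  of <| Fin.cons (Fin.cons a r) fun i => Fin.cons (c i) (B i)

section Entries

variable (a : R) (r c : Fin n → R) (B : Matrix (Fin n) (Fin n) R)

@[simp] lemma blockCons_zero_zero : blockCons a r c B 0 0 = a := rfl
@[simp] lemma blockCons_zero_succ (j : Fin n) : blockCons a r c B 0 j.succ = r j := rfl
@[simp] lemma blockCons_succ_zero (i : Fin n) : blockCons a r c B i.succ 0 = c i := rfl
@[simp] lemma blockCons_succ_succ (i j : Fin n) : blockCons a r c B i.succ j.succ = B i j := rfl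

@[simp] lemma blockCons_submatrix_succ_succ :
    (blockCons a r c B).submatrix Fin.succ Fin.succ = B := rfl

end Entries

lemma ext_iff_fin_succ {M N : Matrix (Fin (n + 1)) (Fin (n + 1)) R} :
    M = N ↔ M 0 0 = N 0 0 ∧ (∀ j : Fin n, M 0 j.succ = N 0 j.succ) ∧
      (∀ i : Fin n, M i.succ 0 = N i.succ 0) ∧
      ∀ i j : Fin n, M i.succ j.succ = N i.succ j.succ := by
  refine ⟨by rintro rfl; simp, fun ⟨h00, h0s, hs0, hss⟩ => ?_⟩
  ext i j
  cases i using Fin.cases <;> cases j using Fin.cases <;> simp [*]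

lemma transpose_blockCons (a : R) (r c : Fin n → R) (B : Matrix (Fin n) (Fin n) R) :
    (blockCons a r c B)ᵀ = blockCons a c r Bᵀ := by
  simp [ext_iff_fin_succ]

lemma blockCons_submatrix_castLE {k : ℕ} (h : k ≤ n) (a : R) (r c : Fin n → R)
    (B : Matrix (Fin n) (Fin n) R) :
    (blockCons a r c B).submatrix (Fin.castLE (Nat.succ_le_succ h))
        (Fin.castLE (Nat.succ_le_succ h)) =
      blockCons a (r ∘ Fin.castLE h) (c ∘ Fin.castLE h)
        (B.submatrix (Fin.castLE h) (Fin.castLE h)) := by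
  simp [ext_iff_fin_succ]

lemma blockCons_mul_blockCons [CommSemiring R] (a a' : R) (r c r' c' : Fin n → R)
    (B B' : Matrix (Fin n) (Fin n) R) :
    blockCons a r c B * blockCons a' r' c' B' =
      blockCons (a * a' + r ⬝ᵥ c') (a • r' + r ᵥ* B') (a' • c + B *ᵥ c')
        (vecMulVec c r' + B * B') := by
  simp [ext_iff_fin_succ, mul_apply, Fin.sum_univ_succ, dotProduct, vecMul, mulVec,
    vecMulVec_apply, mul_comm]

section CommRing

variable [CommRing R]

lemma det_blockCons_zero_left (a : R) (r : Fin n → R) (B : Matrix (Fin n) (Fin n) R) :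
    (blockCons a r 0 B).det = a * B.det := by
  simp [det_succ_column_zero, Fin.sum_univ_succ]

lemma det_blockCons_zero_right (a : R) (c : Fin n → R) (B : Matrix (Fin n) (Fin n) R) :
    (blockCons a 0 c B).det = a * B.det := by
  rw [← det_transpose, transpose_blockCons, det_blockCons_zero_left, det_transpose]

/-- `A.leadingMinor k` is the determinant of the upper left `(k + 1) × (k + 1)` corner of `A`. -/
def leadingMinor (A : Matrix (Fin n) (Fin n) R) (k : Fin n) : R :=
  (A.submatrix (Fin.castLE (show (k : ℕ) + 1 ≤ n from k.isLt))
    (Fin.castLE (show (k : ℕ) + 1 ≤ n from k.isLt))).det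

lemma leadingMinor_zero (A : Matrix (Fin (n + 1)) (Fin (n + 1)) R) :
    A.leadingMinor 0 = A 0 0 :=
  det_fin_one _

/-- The symmetric matrix `L * diag(α, B) * Lᵀ` with `L = [[1, 0], [c, 1]]`. -/
def symmCons (α : R) (c : Fin n → R) (B : Matrix (Fin n) (Fin n) R) :
    Matrix (Fin (n + 1)) (Fin (n + 1)) R :=
  blockCons α (α • c) (α • c) (B + α • vecMulVec c c)

variable (α : R) (c : Fin n → R) (B : Matrix (Fin n) (Fin n) R)

@[simp] lemma symmCons_zero_zero : symmCons α c B 0 0 = α := rfl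

lemma symmCons_eq_mul : symmCons α c B = blockCons 1 0 c 1 * blockCons α (α • c) 0 B := by
  rw [blockCons_mul_blockCons, symmCons]
  simp [add_comm B, vecMulVec_smul, mul_comm]

lemma det_symmCons : (symmCons α c B).det = α * B.det := by
  rw [symmCons_eq_mul, det_mul, det_blockCons_zero_right, det_blockCons_zero_left]
  simp

lemma symmCons_submatrix_castLE {k : ℕ} (h : k ≤ n) :
    (symmCons α c B).submatrix (Fin.castLE (Nat.succ_le_succ h))
        (Fin.castLE (Nat.succ_le_succ h)) =
      symmCons α (c ∘ Fin.castLE h) (B.submatrix (Fin.castLE h) (Fin.castLE h)) :=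
  blockCons_submatrix_castLE h _ _ _ _

lemma leadingMinor_symmCons_succ (k : Fin n) :
    (symmCons α c B).leadingMinor k.succ = α * B.leadingMinor k :=
  (congrArg det (symmCons_submatrix_castLE α c B k.isLt)).trans (det_symmCons _ _ _)

lemma prod_leadingMinor_symmCons :
    ∏ k, (symmCons α c B).leadingMinor k = α ^ (n + 1) * ∏ k, B.leadingMinor k := by
  simp [Fin.prod_univ_succ, leadingMinor_zero, leadingMinor_symmCons_succ,
    Finset.prod_mul_distrib, pow_succ', mul_assoc]

variable {B} in
lemma IsSymm.symmCons (hB : B.IsSymm) : (symmCons α c B).IsSymm := by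
  rw [Matrix.symmCons, IsSymm, transpose_blockCons]
  exact congrArg _ (hB.add (IsSymm.smul (transpose_vecMulVec c c) α)).eq

end CommRing

section Field

variable {K : Type*} [Field K]

def pivotColumn (A : Matrix (Fin (n + 1)) (Fin (n + 1)) K) : Fin n → K :=
  (A 0 0)⁻¹ • fun i => A i.succ 0

def pivotSchurComplement (A : Matrix (Fin (n + 1)) (Fin (n + 1)) K) :
    Matrix (Fin n) (Fin n) K :=
  A.submatrix Fin.succ Fin.succ - (A 0 0)⁻¹ • vecMulVec (fun i => A i.succ 0) fun j => A 0 j.succ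

lemma IsSymm.pivotSchurComplement {A : Matrix (Fin (n + 1)) (Fin (n + 1)) K} (hA : A.IsSymm) :
    A.pivotSchurComplement.IsSymm := by
  refine (hA.submatrix _).sub (IsSymm.smul (IsSymm.ext fun i j => ?_) _)
  simp [vecMulVec_apply, hA.apply, mul_comm]

lemma symmCons_pivot {A : Matrix (Fin (n + 1)) (Fin (n + 1)) K} (hA : A.IsSymm)
    (h : A 0 0 ≠ 0) : symmCons (A 0 0) A.pivotColumn A.pivotSchurComplement = A := by
  simp [ext_iff_fin_succ, symmCons, pivotColumn, pivotSchurComplement, h, hA.apply 0]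

lemma pivotColumn_symmCons {α : K} (h : α ≠ 0) (c : Fin n → K) (B : Matrix (Fin n) (Fin n) K) :
    (symmCons α c B).pivotColumn = c :=
  inv_smul_smul₀ h c

lemma pivotSchurComplement_symmCons (α : K) (c : Fin n → K) (B : Matrix (Fin n) (Fin n) K) :
    (symmCons α c B).pivotSchurComplement = B := by
  ext i j
  simp only [pivotSchurComplement, symmCons, blockCons_submatrix_succ_succ, blockCons_zero_zero,
    blockCons_succ_zero, blockCons_zero_succ, sub_apply, add_apply, smul_apply, Pi.smul_apply,
    smul_eq_mul, vecMulVec_apply]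
  linear_combination -(c i * c j) * inv_mul_mul_self α

end Field

end Matrix

section Continuity

variable {Y K : Type*} [TopologicalSpace Y] {n : ℕ}

lemma Continuous.matrix_blockCons [TopologicalSpace K] {a : Y → K} {r c : Y → Fin n → K}
    {B : Y → Matrix (Fin n) (Fin n) K} (ha : Continuous a) (hr : Continuous r)
    (hc : Continuous c) (hB : Continuous B) :
    Continuous fun y => blockCons (a y) (r y) (c y) (B y) :=
  continuous_matrix fun i j => by
    cases i using Fin.cases <;> cases j using Fin.cases <;> simp only [blockCons_zero_zero,
      blockCons_zero_succ, blockCons_succ_zero, blockCons_succ_succ] <;> fun_prop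

variable [Field K] [TopologicalSpace K] [IsTopologicalDivisionRing K]

lemma Continuous.matrix_symmCons {α : Y → K} {c : Y → Fin n → K}
    {B : Y → Matrix (Fin n) (Fin n) K} (hα : Continuous α) (hc : Continuous c)
    (hB : Continuous B) : Continuous fun y => symmCons (α y) (c y) (B y) := by
  unfold symmCons
  apply Continuous.matrix_blockCons <;> fun_prop

lemma Continuous.matrix_pivotColumn {A : Y → Matrix (Fin (n + 1)) (Fin (n + 1)) K}
    (hA : Continuous A) (h : ∀ y, A y 0 0 ≠ 0) : Continuous fun y => (A y).pivotColumn := by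
  unfold pivotColumn
  fun_prop (disch := exact h)

lemma Continuous.matrix_pivotSchurComplement {A : Y → Matrix (Fin (n + 1)) (Fin (n + 1)) K}
    (hA : Continuous A) (h : ∀ y, A y 0 0 ≠ 0) :
    Continuous fun y => (A y).pivotSchurComplement := by
  unfold pivotSchurComplement
  fun_prop (disch := exact h)

end Continuity

def Fin.consHomeomorph {n : ℕ} (X : Fin (n + 1) → Type*) [∀ i, TopologicalSpace (X i)] :
    X 0 × (∀ i : Fin n, X i.succ) ≃ₜ ∀ i, X i where
  toEquiv := Fin.consEquiv X
  continuous_toFun := continuous_fst.finCons continuous_snd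
  continuous_invFun := (continuous_apply 0).prodMk continuous_id.finTail

noncomputable def ContinuousMap.HomotopyEquiv.prodOfContractibleRight (X Y : Type*)
    [TopologicalSpace X] [TopologicalSpace Y] [ContractibleSpace Y] : X × Y ≃ₕ X :=
  ((HomotopyEquiv.refl X).prodCongr (ContractibleSpace.hequiv_unit Y).some).trans
    (Homeomorph.prodPUnit X).toHomotopyEquiv

noncomputable def homotopyEquivUnitSphereOfNeZero (E : Type*) [NormedAddCommGroup E]
    [NormedSpace ℝ E] : ({0}ᶜ : Set E) ≃ₕ Metric.sphere (0 : E) 1 :=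
  haveI : ContractibleSpace (Set.Ioi (0 : ℝ)) := (convex_Ioi 0).contractibleSpace Set.nonempty_Ioi
  (homeomorphUnitSphereProd E).toHomotopyEquiv.trans (HomotopyEquiv.prodOfContractibleRight _ _)

section Fiber

variable {X K : Type*} [Field K]

def symmMinorFiber (f : X → K) (n : ℕ) : Set (X × Matrix (Fin n) (Fin n) K) :=
  {p | p.2.IsSymm ∧ f p.1 * ∏ k, p.2.leadingMinor k = 1}

variable {f : X → K} {n : ℕ}

lemma apply_ne_zero_of_mem_symmMinorFiber {p : X × Matrix (Fin n) (Fin n) K}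
    (hp : p ∈ symmMinorFiber f n) : f p.1 ≠ 0 :=
  left_ne_zero_of_mul_eq_one hp.2

lemma pivot_ne_zero_of_mem_symmMinorFiber {p : X × Matrix (Fin (n + 1)) (Fin (n + 1)) K}
    (hp : p ∈ symmMinorFiber f (n + 1)) : p.2 0 0 ≠ 0 := by
  rw [← leadingMinor_zero p.2]
  exact Finset.prod_ne_zero_iff.mp (right_ne_zero_of_mul_eq_one hp.2) 0 (Finset.mem_univ _)

lemma symmCons_mem_symmMinorFiber {x : X} {α : K} (c : Fin n → K) {B : Matrix (Fin n) (Fin n) K}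
    (h : ((α, x), B) ∈ symmMinorFiber (fun q : K × X => q.1 ^ (n + 1) * f q.2) n) :
    (x, symmCons α c B) ∈ symmMinorFiber f (n + 1) := by
  refine ⟨h.1.symmCons α c, ?_⟩
  rw [prod_leadingMinor_symmCons, ← h.2]
  ring

lemma pivot_mem_symmMinorFiber {p : X × Matrix (Fin (n + 1)) (Fin (n + 1)) K}
    (hp : p ∈ symmMinorFiber f (n + 1)) :
    ((p.2 0 0, p.1), p.2.pivotSchurComplement) ∈
      symmMinorFiber (fun q : K × X => q.1 ^ (n + 1) * f q.2) n := by
  refine ⟨hp.1.pivotSchurComplement, ?_⟩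
  rw [← hp.2]
  conv_rhs => rw [← symmCons_pivot hp.1 (pivot_ne_zero_of_mem_symmMinorFiber hp),
    prod_leadingMinor_symmCons]
  dsimp only
  ring

variable [TopologicalSpace X] [TopologicalSpace K] [IsTopologicalDivisionRing K]

def symmMinorFiberSuccHomeomorph (f : X → K) (n : ℕ) :
    symmMinorFiber f (n + 1) ≃ₜ
      symmMinorFiber (fun q : K × X => q.1 ^ (n + 1) * f q.2) n × (Fin n → K) where
  toFun p := (⟨_, pivot_mem_symmMinorFiber p.2⟩, p.1.2.pivotColumn)
  invFun q := ⟨_, symmCons_mem_symmMinorFiber q.2 q.1.2⟩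
  left_inv p := Subtype.ext <| Prod.ext rfl <|
    symmCons_pivot p.2.1 (pivot_ne_zero_of_mem_symmMinorFiber p.2)
  right_inv := by
    rintro ⟨⟨⟨⟨α, x⟩, B⟩, hq⟩, c⟩
    have hα : α ≠ 0 := fun h0 => apply_ne_zero_of_mem_symmMinorFiber hq (by simp [h0])
    exact Prod.ext (Subtype.ext (Prod.ext rfl (pivotSchurComplement_symmCons α c B)))
      (pivotColumn_symmCons hα c B)
  continuous_toFun := by
    have hA : Continuous fun p : symmMinorFiber f (n + 1) => p.1.2 := by fun_prop
    have h0 := fun p : symmMinorFiber f (n + 1) => pivot_ne_zero_of_mem_symmMinorFiber p.2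
    refine (Continuous.subtype_mk ?_ _).prodMk (hA.matrix_pivotColumn h0)
    exact ((hA.matrix_elem 0 0).prodMk (by fun_prop)).prodMk
      (hA.matrix_pivotSchurComplement h0)
  continuous_invFun :=
    Continuous.subtype_mk ((by fun_prop : Continuous _).prodMk
      (Continuous.matrix_symmCons (by fun_prop) (by fun_prop) (by fun_prop))) _

def symmMinorFiberOneHomeomorph {f : X → K} (hf : Continuous f) :
    symmMinorFiber f 1 ≃ₜ {x | f x ≠ 0} where
  toFun p := ⟨p.1.1, apply_ne_zero_of_mem_symmMinorFiber p.2⟩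
  invFun x := ⟨(x, of fun _ _ => (f x)⁻¹), IsSymm.ext fun _ _ => rfl, by
    simpa [leadingMinor_zero] using mul_inv_cancel₀ x.2⟩
  left_inv p := by
    have hp : f p.1.1 * p.1.2 0 0 = 1 := by simpa [leadingMinor_zero] using p.2.2
    refine Subtype.ext (Prod.ext rfl ?_)
    ext i j
    simp [Subsingleton.elim i 0, Subsingleton.elim j 0, eq_inv_of_mul_eq_one_right hp]
  right_inv _ := rfl
  continuous_toFun := by fun_prop
  continuous_invFun :=
    Continuous.subtype_mk (continuous_subtype_val.prodMk (continuous_matrix fun _ _ =>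
      (hf.comp continuous_subtype_val).inv₀ fun x => x.2)) _

end Fiber

lemma setOf_pow_mul_ne_zero {X M₀ : Type*} [MonoidWithZero M₀] [NoZeroDivisors M₀]
    (f : X → M₀) (k : ℕ) : {q : M₀ × X | q.1 ^ (k + 1) * f q.2 ≠ 0} = {0}ᶜ ×ˢ {x | f x ≠ 0} := by
  ext
  simp

open Metric in
theorem nonempty_homotopyEquiv_symmMinorFiber_torus {X : Type*} [TopologicalSpace X]
    {f : X → ℂ} (hf : Continuous f) {d : ℕ} (e : {x | f x ≠ 0} ≃ₕ (Fin d → sphere (0 : ℂ) 1))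
    (n : ℕ) : Nonempty (symmMinorFiber f (n + 1) ≃ₕ (Fin (d + n) → sphere (0 : ℂ) 1)) := by
  induction n generalizing X d with
  | zero => exact ⟨(symmMinorFiberOneHomeomorph hf).toHomotopyEquiv.trans e⟩
  | succ n ih =>
    let e' : {q : ℂ × X | q.1 ^ (n + 2) * f q.2 ≠ 0} ≃ₕ (Fin (d + 1) → sphere (0 : ℂ) 1) :=
      ((Homeomorph.setCongr (setOf_pow_mul_ne_zero f (n + 1))).trans
        (Homeomorph.Set.prod _ _)).toHomotopyEquiv.trans
        (((homotopyEquivUnitSphereOfNeZero ℂ).prodCongr e).trans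
          (Fin.consHomeomorph fun _ => sphere (0 : ℂ) 1).toHomotopyEquiv)
    obtain ⟨g⟩ := ih (by fun_prop) e'
    rw [show d + (n + 1) = d + 1 + n by omega]
    exact ⟨(symmMinorFiberSuccHomeomorph f (n + 1)).toHomotopyEquiv.trans
      ((HomotopyEquiv.prodOfContractibleRight _ _).trans g)⟩

def milnorFiberHomeomorph (m : ℕ) :
    {A : Matrix (Fin m) (Fin m) ℂ // Aᵀ = A ∧
        ∏ k : Fin m,
          (A.submatrix (Fin.castLE (show (k : ℕ) + 1 ≤ m from k.isLt))
            (Fin.castLE (show (k : ℕ) + 1 ≤ m from k.isLt))).det = 1} ≃ₜ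
      symmMinorFiber (fun _ : Unit => (1 : ℂ)) m where
  toFun A := ⟨((), A.1), A.2.1, (one_mul _).trans A.2.2⟩
  invFun p := ⟨p.1.2, p.2.1, (one_mul _).symm.trans p.2.2⟩
  left_inv _ := rfl
  right_inv _ := rfl
  continuous_toFun := by fun_prop
  continuous_invFun := by fun_prop

/-- The global Milnor fiber of the determinantal arrangement
`∏_{k=1}^{m} det (A^(k)) = 0` on the space of complex symmetric `m × m` matrices,
i.e. the space of complex symmetric `m × m` matrices `A` with
`∏_{k=1}^{m} det (A^(k)) = 1`, is homotopy equivalent to the `(m-1)`-torus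
`(S¹)^(m-1)`. -/
theorem symmetric_milnor_fiber_homotopy_torus (m : ℕ) (hm : 1 ≤ m) :
    Nonempty (ContinuousMap.HomotopyEquiv
      {A : Matrix (Fin m) (Fin m) ℂ // Aᵀ = A ∧
        ∏ k : Fin m,
          (A.submatrix (Fin.castLE (show (k : ℕ) + 1 ≤ m from k.isLt))
            (Fin.castLE (show (k : ℕ) + 1 ≤ m from k.isLt))).det = 1}
      (Fin (m - 1) → Metric.sphere (0 : ℂ) 1)) := by
  obtain ⟨n, rfl⟩ := Nat.exists_eq_add_of_le' hm
  have : Unique {x : Unit | (1 : ℂ) ≠ 0} := ⟨⟨⟨(), one_ne_zero⟩⟩, fun _ => rfl⟩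
  obtain ⟨e⟩ := nonempty_homotopyEquiv_symmMinorFiber_torus (f := fun _ : Unit => (1 : ℂ))
    continuous_const
    (Homeomorph.homeomorphOfUnique _ (Fin 0 → Metric.sphere (0 : ℂ) 1)).toHomotopyEquiv n
  rw [zero_add] at e
  exact ⟨(milnorFiberHomeomorph (n + 1)).toHomotopyEquiv.trans e⟩
end

section
/- Let n ≥ 1, d ≥ 1, and let h : ℂⁿ → ℂ be the evaluation of a homogeneous polynomial of degree d in n variables over ℂ which is not identically zero. Then the restriction of h to h⁻¹(ℂ \ {0}) is a locally trivial fibration over ℂ \ {0}: for every w₀ ∈ ℂ with w₀ ≠ 0, there exist an open neighborhood W of w₀ with W ⊆ ℂ \ {0} and a homeomorphism ψ : W × h⁻¹({w₀}) → h⁻¹(W) such that h(ψ(w, z)) = w for all w ∈ W and z ∈ h⁻¹({w₀}). -/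
/-!
Homogeneity gives `h (c • z) = c ^ d * h z`. On the disc `W = B(w₀, ‖w₀‖)` the quotient `w / w₀`
stays in the slit plane, so `r w = (w / w₀) ^ (1 / d)` is a continuous nonvanishing `d`-th root of
`w / w₀`, and `(w, z) ↦ r w • z` carries `W × h⁻¹{w₀}` onto `h⁻¹ W`, with inverse
`z ↦ (h z, (r (h z))⁻¹ • z)`.
-/

open MvPolynomial

theorem MvPolynomial.IsHomogeneous.eval_smul {R σ : Type*} [CommSemiring R]
    {φ : MvPolynomial σ R} {d : ℕ} (hφ : φ.IsHomogeneous d) (c : R) (z : σ → R) :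
    eval (c • z) φ = c ^ d * eval z φ := by
  rw [eval_eq, eval_eq, Finset.mul_sum]
  refine Finset.sum_congr rfl fun m hm => ?_
  have hdeg : m.degree = d := by
    rw [Finsupp.degree_eq_weight_one]; exact hφ (mem_support_iff.mp hm)
  simp only [Pi.smul_apply, smul_eq_mul, mul_pow, Finset.prod_mul_distrib,
    Finset.prod_pow_eq_pow_sum, ← Finsupp.degree_apply, hdeg]
  ring

section Trivialization

variable {𝕜 E : Type*} [GroupWithZero 𝕜] [TopologicalSpace 𝕜] [ContinuousInv₀ 𝕜]
  [TopologicalSpace E] [MulAction 𝕜 E] [ContinuousSMul 𝕜 E]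

theorem exists_fiber_prod_homeomorph_of_root {f : E → 𝕜} {d : ℕ} (hf : Continuous f)
    (hhom : ∀ (c : 𝕜) (z : E), f (c • z) = c ^ d * f z) {W : Set 𝕜} {w₀ : 𝕜} {r : 𝕜 → 𝕜}
    (hr : ContinuousOn r W) (hr0 : ∀ w ∈ W, r w ≠ 0) (hrpow : ∀ w ∈ W, r w ^ d * w₀ = w) :
    ∃ ψ : (W × {z // f z = w₀}) ≃ₜ {z // f z ∈ W}, ∀ w z, f (ψ (w, z)) = w := by
  have hf_smul : ∀ w ∈ W, ∀ z, f z = w₀ → f (r w • z) = w := fun w hw z hz => by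
    rw [hhom, hz, hrpow w hw]
  have hf_inv_smul : ∀ z, f z ∈ W → f ((r (f z))⁻¹ • z) = w₀ := fun z hz => by
    rw [hhom, inv_pow, inv_mul_eq_iff_eq_mul₀ (pow_ne_zero _ (hr0 _ hz)), hrpow _ hz]
  refine ⟨
    { toFun := fun p => ⟨r p.1 • (p.2 : E), by rw [hf_smul _ p.1.2 _ p.2.2]; exact p.1.2⟩
      invFun := fun z => (⟨f z, z.2⟩, ⟨(r (f z))⁻¹ • (z : E), hf_inv_smul z z.2⟩)
      left_inv := by
        rintro ⟨w, z⟩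
        have hw : f (r w • (z : E)) = w := hf_smul _ w.2 _ z.2
        ext
        · exact hw
        · simp only [hw, smul_smul, inv_mul_cancel₀ (hr0 _ w.2), one_smul]
      right_inv := by
        rintro ⟨z, hz⟩
        ext
        simp only [smul_smul, mul_inv_cancel₀ (hr0 _ hz), one_smul]
      continuous_toFun := by
        have hr' : Continuous fun p : W × {z // f z = w₀} => r p.1 :=
          hr.comp_continuous (continuous_subtype_val.comp continuous_fst) fun p => p.1.2
        exact (hr'.smul (continuous_subtype_val.comp continuous_snd)).subtype_mk _
      continuous_invFun := by
        have hfW : Continuous fun z : {z // f z ∈ W} => f z := hf.comp continuous_subtype_val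
        have hr' : Continuous fun z : {z // f z ∈ W} => (r (f z))⁻¹ :=
          (hr.comp_continuous hfW fun z => z.2).inv₀ fun z => hr0 _ z.2
        fun_prop }, fun w z => hf_smul _ w.2 _ z.2⟩

end Trivialization

theorem Complex.div_mem_slitPlane_of_mem_ball {w₀ w : ℂ} (hw : w ∈ Metric.ball w₀ ‖w₀‖) :
    w / w₀ ∈ slitPlane := by
  have hw₀ : w₀ ≠ 0 := by rintro rfl; simp at hw
  have h : ‖(w - w₀) / w₀‖ < 1 := by
    rwa [norm_div, div_lt_one (norm_pos_iff.mpr hw₀), ← dist_eq_norm]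
  simpa [sub_div, div_self hw₀] using mem_slitPlane_of_norm_lt_one h

theorem Complex.continuousOn_div_cpow_ball (w₀ y : ℂ) :
    ContinuousOn (fun w => (w / w₀) ^ y) (Metric.ball w₀ ‖w₀‖) := fun _ hw =>
  ((continuousAt_id.div_const w₀).cpow continuousAt_const
    (div_mem_slitPlane_of_mem_ball hw)).continuousWithinAt

theorem homogeneous_polynomial_fibration_general (n d : ℕ) (hd : 1 ≤ d)
    (h : MvPolynomial (Fin n) ℂ) (hhom : h.IsHomogeneous d) :
    ∀ w₀ : ℂ, w₀ ≠ 0 →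
      ∃ W : Set ℂ, IsOpen W ∧ w₀ ∈ W ∧ W ⊆ {0}ᶜ ∧
        ∃ ψ : (W × {z : Fin n → ℂ // MvPolynomial.eval z h = w₀}) ≃ₜ
              {z : Fin n → ℂ // MvPolynomial.eval z h ∈ W},
          ∀ (w : W) (z : {z : Fin n → ℂ // MvPolynomial.eval z h = w₀}),
            MvPolynomial.eval ((ψ (w, z) : {z : Fin n → ℂ //
              MvPolynomial.eval z h ∈ W}) : Fin n → ℂ) h = (w : ℂ) := by
  intro w₀ hw₀
  have hslit : ∀ w ∈ Metric.ball w₀ ‖w₀‖, w / w₀ ∈ Complex.slitPlane :=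
    fun w => Complex.div_mem_slitPlane_of_mem_ball
  refine ⟨Metric.ball w₀ ‖w₀‖, Metric.isOpen_ball, Metric.mem_ball_self (norm_pos_iff.mpr hw₀),
    fun w hw => ?_, ?_⟩
  · exact (div_ne_zero_iff.mp (Complex.slitPlane_ne_zero (hslit w hw))).1
  refine exists_fiber_prod_homeomorph_of_root (continuous_eval h) hhom.eval_smul
    (Complex.continuousOn_div_cpow_ball w₀ (d : ℂ)⁻¹) (fun w hw => ?_) (fun w _ => ?_)
  · exact (Complex.cpow_ne_zero_iff ..).mpr (.inl (Complex.slitPlane_ne_zero (hslit w hw)))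
  · rw [Complex.cpow_nat_inv_pow _ (by omega), div_mul_cancel₀ _ hw₀]

/-- A nonzero homogeneous polynomial `h` of degree `d ≥ 1` on `ℂⁿ` restricts to a
locally trivial fibration `h : h⁻¹(ℂ \ {0}) → ℂ \ {0}`: every `w₀ ≠ 0` has an open
neighborhood `W ⊆ ℂ \ {0}` over which `h` is trivial. -/
theorem homogeneous_polynomial_fibration (n d : ℕ) (hn : 1 ≤ n) (hd : 1 ≤ d)
    (h : MvPolynomial (Fin n) ℂ) (hhom : h.IsHomogeneous d) (hne : h ≠ 0) :
    ∀ w₀ : ℂ, w₀ ≠ 0 →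
      ∃ W : Set ℂ, IsOpen W ∧ w₀ ∈ W ∧ W ⊆ {0}ᶜ ∧
        ∃ ψ : (W × {z : Fin n → ℂ // MvPolynomial.eval z h = w₀}) ≃ₜ
              {z : Fin n → ℂ // MvPolynomial.eval z h ∈ W},
          ∀ (w : W) (z : {z : Fin n → ℂ // MvPolynomial.eval z h = w₀}),
            MvPolynomial.eval ((ψ (w, z) : {z : Fin n → ℂ //
              MvPolynomial.eval z h ∈ W}) : Fin n → ℂ) h = (w : ℂ) :=
  homogeneous_polynomial_fibration_general n d hd h hhom
end

section
/- Let m ≥ 1. Let G be the space of complex invertible lower triangular m×m matrices and let U be the space of complex symmetric m×m matrices A with det(A^{(k)}) ≠ 0 for all k = 1, …, m, both with the subspace topology from the space of m×m complex matrices. Then the map p : G → U given by p(B) = B · Bᵀ is a covering map. -/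
/-!
The group `{±1}ᵐ` acts freely on `G` by `B ↦ B * diagonal d`, and the fibres of `p` are exactly
the orbits: if `B * Bᵀ = C * Cᵀ` then `C⁻¹ * B` is lower triangular and orthogonal, hence a sign
diagonal. A finite group acting freely on a locally compact Hausdorff space is properly
discontinuous, so `p` is a covering map as soon as it is a quotient map. It is even open: through
every point `B` of `G` passes a continuous local section, namely the Cholesky recursion (peel off
the last row and take a square root of the Schur complement) run with each square root taken on
the branch through the corresponding diagonal entry of `B`.
-/

open Matrix

theorem Int.exists_units_cast_eq_of_mul_self_eq_one {R : Type*} [Ring R] [NoZeroDivisors R]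
    {x : R} (h : x * x = 1) : ∃ u : ℤˣ, ((u : ℤ) : R) = x := by
  rcases mul_self_eq_one_iff.1 h with rfl | rfl
  exacts [⟨1, by simp⟩, ⟨-1, by simp⟩]

namespace Matrix

section Triangular

variable {ι : Type*} [Fintype ι] [LinearOrder ι]

section Domain

variable {R : Type*} [CommRing R] [IsDomain R]

theorem IsLowerTriangular.det_ne_zero {B : Matrix ι ι R} (hB : B.IsLowerTriangular)
    (hdiag : ∀ i, B i i ≠ 0) : B.det ≠ 0 := by
  rw [det_of_isLowerTriangular _ hB]
  exact Finset.prod_ne_zero_iff.2 fun i _ => hdiag i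

theorem IsLowerTriangular.diag_ne_zero {B : Matrix ι ι R} (hB : B.IsLowerTriangular)
    (hdet : B.det ≠ 0) (i : ι) : B i i ≠ 0 := by
  rw [det_of_isLowerTriangular _ hB] at hdet
  exact Finset.prod_ne_zero_iff.1 hdet i (Finset.mem_univ i)

end Domain

variable [DecidableEq ι] {K : Type*} [Field K]

omit [Fintype ι] in
theorem IsLowerTriangular.exists_eq_diagonal_of_isUpperTriangular {N : Matrix ι ι K}
    (hl : N.IsLowerTriangular) (hu : N.IsUpperTriangular) : ∃ D, N = diagonal D := by
  refine ⟨N.diag, ?_⟩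
  ext i j
  rcases lt_trichotomy i j with hij | rfl | hij
  · rw [hl hij, diagonal_apply_ne _ hij.ne]
  · rw [diagonal_apply_eq, diag_apply]
  · rw [hu hij, diagonal_apply_ne _ hij.ne']

theorem IsLowerTriangular.exists_signs_of_mul_transpose_eq {B C : Matrix ι ι K}
    (hB : B.IsLowerTriangular) (hC : C.IsLowerTriangular) (hCdet : C.det ≠ 0)
    (h : B * Bᵀ = C * Cᵀ) : ∃ d : ι → ℤˣ, B = C * diagonal fun i => ((d i : ℤ) : K) := by
  have : Invertible C := C.invertibleOfIsUnitDet (isUnit_iff_ne_zero.2 hCdet)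
  set N := C⁻¹ * B
  have hNN : N * Nᵀ = 1 := by
    rw [transpose_mul, Matrix.mul_assoc, ← Matrix.mul_assoc B, h, transpose_nonsing_inv,
      ← Matrix.mul_assoc, inv_mul_cancel_left_of_invertible, mul_inv_of_invertible]
  have hNl : N.IsLowerTriangular := (blockTriangular_inv_of_blockTriangular hC).mul hB
  -- `Nᵀ = N⁻¹` is lower triangular, so `N` is also upper triangular, hence diagonal.
  have hNu : N.IsUpperTriangular := fun i j hji => by
    have : Invertible N := invertibleOfRightInverse N Nᵀ hNN
    rw [← transpose_apply N, (inv_eq_right_inv hNN).symm]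
    exact blockTriangular_inv_of_blockTriangular hNl hji
  obtain ⟨D, hD⟩ := hNl.exists_eq_diagonal_of_isUpperTriangular hNu
  rw [hD, diagonal_transpose, diagonal_mul_diagonal, ← diagonal_one, diagonal_eq_diagonal_iff]
    at hNN
  choose d hd using fun i => Int.exists_units_cast_eq_of_mul_self_eq_one (hNN i)
  refine ⟨d, ?_⟩
  rw [funext hd, ← hD, mul_inv_cancel_left_of_invertible]

end Triangular

section LowerSnoc

variable {R : Type*} {n : ℕ}

/-- The block matrix `!![B, 0; vᵀ, b]`. -/
def lowerSnoc [Zero R] (B : Matrix (Fin n) (Fin n) R) (v : Fin n → R) (b : R) :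
    Matrix (Fin (n + 1)) (Fin (n + 1)) R :=
  of (Fin.snoc (fun i => Fin.snoc (B i) 0) (Fin.snoc v b))

section Zero

variable [Zero R] (B : Matrix (Fin n) (Fin n) R) (v : Fin n → R) (b : R)

@[simp] theorem lowerSnoc_castSucc_castSucc (i j : Fin n) :
    lowerSnoc B v b i.castSucc j.castSucc = B i j := by
  simp [lowerSnoc]

@[simp] theorem lowerSnoc_castSucc_last (i : Fin n) :
    lowerSnoc B v b i.castSucc (Fin.last n) = 0 := by
  simp [lowerSnoc]

@[simp] theorem lowerSnoc_last_castSucc (j : Fin n) :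
    lowerSnoc B v b (Fin.last n) j.castSucc = v j := by
  simp [lowerSnoc]

@[simp] theorem lowerSnoc_last_last : lowerSnoc B v b (Fin.last n) (Fin.last n) = b := by
  simp [lowerSnoc]

variable {B v b} in
theorem isLowerTriangular_lowerSnoc (hB : B.IsLowerTriangular) :
    (lowerSnoc B v b).IsLowerTriangular := by
  intro i j hij
  induction i using Fin.lastCases with
  | last => exact absurd hij (not_lt.2 (Fin.le_last j))
  | cast i =>
    induction j using Fin.lastCases with
    | last => simp
    | cast j => simpa using hB (Fin.castSucc_lt_castSucc_iff.1 hij)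

theorem IsLowerTriangular.eq_lowerSnoc {B : Matrix (Fin (n + 1)) (Fin (n + 1)) R}
    (hB : B.IsLowerTriangular) :
    B = lowerSnoc (B.submatrix Fin.castSucc Fin.castSucc) (fun j => B (Fin.last n) j.castSucc)
      (B (Fin.last n) (Fin.last n)) := by
  ext i j
  induction i using Fin.lastCases <;> induction j using Fin.lastCases <;> simp
  exact hB (Fin.castSucc_lt_last _)

theorem IsLowerTriangular.exists_eq_lowerSnoc {B : Matrix (Fin (n + 1)) (Fin (n + 1)) R}
    (hB : B.IsLowerTriangular) (hdiag : ∀ i, B i i ≠ 0) :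
    ∃ B' v b, B = lowerSnoc B' v b ∧ B'.IsLowerTriangular ∧ (∀ i, B' i i ≠ 0) ∧ b ≠ 0 :=
  ⟨_, _, _, hB.eq_lowerSnoc, fun _ _ hij => hB (Fin.castSucc_lt_castSucc_iff.2 hij),
    fun _ => hdiag _, hdiag _⟩

@[simp] theorem init_diag_lowerSnoc : Fin.init (lowerSnoc B v b).diag = B.diag := by
  ext; simp [Fin.init]

@[simp] theorem diag_lowerSnoc_last : (lowerSnoc B v b).diag (Fin.last n) = b := by
  simp

end Zero

section CommRing

variable [CommRing R] (B : Matrix (Fin n) (Fin n) R) (v : Fin n → R) (b : R)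

@[simp] theorem lowerSnoc_mul_transpose_submatrix_castSucc :
    (lowerSnoc B v b * (lowerSnoc B v b)ᵀ).submatrix Fin.castSucc Fin.castSucc = B * Bᵀ := by
  ext; simp [mul_apply, Fin.sum_univ_castSucc]

@[simp] theorem lowerSnoc_mul_transpose_castSucc_castSucc (i j : Fin n) :
    (lowerSnoc B v b * (lowerSnoc B v b)ᵀ) i.castSucc j.castSucc = (B * Bᵀ) i j := by
  simp [mul_apply, Fin.sum_univ_castSucc]

@[simp] theorem lowerSnoc_mul_transpose_castSucc_last (i : Fin n) :
    (lowerSnoc B v b * (lowerSnoc B v b)ᵀ) i.castSucc (Fin.last n) = (B *ᵥ v) i := by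
  simp [mul_apply, Fin.sum_univ_castSucc, mulVec, dotProduct]

@[simp] theorem lowerSnoc_mul_transpose_last_castSucc (j : Fin n) :
    (lowerSnoc B v b * (lowerSnoc B v b)ᵀ) (Fin.last n) j.castSucc = (B *ᵥ v) j := by
  simp [mul_apply, Fin.sum_univ_castSucc, mulVec, dotProduct, mul_comm]

@[simp] theorem lowerSnoc_mul_transpose_last_last :
    (lowerSnoc B v b * (lowerSnoc B v b)ᵀ) (Fin.last n) (Fin.last n) = v ⬝ᵥ v + b * b := by
  simp [mul_apply, Fin.sum_univ_castSucc, dotProduct]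

variable {B v b} in
theorem lowerSnoc_mul_transpose_eq {A : Matrix (Fin (n + 1)) (Fin (n + 1)) R} (hA : Aᵀ = A)
    (hB : B * Bᵀ = A.submatrix Fin.castSucc Fin.castSucc)
    (hv : B *ᵥ v = fun j => A (Fin.last n) j.castSucc)
    (hb : v ⬝ᵥ v + b * b = A (Fin.last n) (Fin.last n)) :
    lowerSnoc B v b * (lowerSnoc B v b)ᵀ = A := by
  have hsymm (i : Fin n) : A i.castSucc (Fin.last n) = A (Fin.last n) i.castSucc :=
    congr_fun₂ hA (Fin.last n) i.castSucc
  ext i j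
  induction i using Fin.lastCases <;> induction j using Fin.lastCases
  · simpa using hb
  · simpa using congr_fun hv _
  · simpa [hsymm] using congr_fun hv _
  · simpa using congr_fun₂ hB _ _

end CommRing

theorem continuous_lowerSnoc [TopologicalSpace R] [Zero R] :
    Continuous fun x : Matrix (Fin n) (Fin n) R × (Fin n → R) × R =>
      lowerSnoc x.1 x.2.1 x.2.2 := by
  refine continuous_matrix fun i j => ?_
  induction i using Fin.lastCases <;> induction j using Fin.lastCases <;> simp <;> fun_prop

end LowerSnoc

end Matrix

namespace Complex

/-- The square root of `c` on the branch taking `u * u` to `u`. -/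
noncomputable def sqrtNear (u c : ℂ) : ℂ := u * (c / (u * u)) ^ (2⁻¹ : ℂ)

variable {u : ℂ}

theorem sqrtNear_mul_self (hu : u ≠ 0) (c : ℂ) : sqrtNear u c * sqrtNear u c = c := by
  have hsq := cpow_nat_inv_pow (c / (u * u)) two_ne_zero
  push_cast at hsq
  rw [sqrtNear, mul_mul_mul_comm, ← pow_two ((c / (u * u)) ^ _), hsq,
    mul_div_cancel₀ _ (mul_ne_zero hu hu)]

theorem sqrtNear_self_mul_self (hu : u ≠ 0) : sqrtNear u (u * u) = u := by
  rw [sqrtNear, div_self (mul_ne_zero hu hu), one_cpow, mul_one]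

theorem continuousAt_sqrtNear (hu : u ≠ 0) : ContinuousAt (sqrtNear u) (u * u) := by
  have h1 : u * u / (u * u) ∈ slitPlane := by
    rw [div_self (mul_ne_zero hu hu)]; exact one_mem_slitPlane
  exact continuousAt_const.mul <| (continuousAt_cpow_const (b := 2⁻¹) h1).comp
    (f := fun c => c / (u * u)) (continuousAt_id.div_const _)

end Complex

namespace Matrix

section LeadingMinors

variable {R : Type*} [CommRing R] {n : ℕ}

def HasNonzeroLeadingMinors (A : Matrix (Fin n) (Fin n) R) : Prop :=
  ∀ k : ℕ, 1 ≤ k → ∀ hk : k ≤ n, (A.submatrix (Fin.castLE hk) (Fin.castLE hk)).det ≠ 0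

theorem HasNonzeroLeadingMinors.det_ne_zero [Nontrivial R] {A : Matrix (Fin n) (Fin n) R}
    (hA : A.HasNonzeroLeadingMinors) : A.det ≠ 0 := by
  cases n with
  | zero => simp
  | succ n => exact hA (n + 1) n.succ_pos le_rfl

theorem HasNonzeroLeadingMinors.submatrix_castSucc
    {A : Matrix (Fin (n + 1)) (Fin (n + 1)) R} (hA : A.HasNonzeroLeadingMinors) :
    (A.submatrix Fin.castSucc Fin.castSucc).HasNonzeroLeadingMinors :=
  fun k hk1 hk => hA k hk1 (hk.trans n.le_succ)

theorem IsLowerTriangular.submatrix_castLE_mul_transpose {B : Matrix (Fin n) (Fin n) R}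
    (hB : B.IsLowerTriangular) {k : ℕ} (hk : k ≤ n) :
    (B * Bᵀ).submatrix (Fin.castLE hk) (Fin.castLE hk) =
      B.submatrix (Fin.castLE hk) (Fin.castLE hk) *
        (B.submatrix (Fin.castLE hk) (Fin.castLE hk))ᵀ := by
  ext i j
  refine (Fintype.sum_of_injective _ (Fin.castLE_injective hk) _ _ (fun l hl => ?_)
    fun _ => rfl).symm
  have : Fin.castLE hk i < l := by
    by_contra! h
    exact hl ⟨⟨l, (Fin.le_def.1 h).trans_lt i.isLt⟩, rfl⟩
  exact mul_eq_zero_of_left (hB this) _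

theorem IsLowerTriangular.hasNonzeroLeadingMinors_mul_transpose [IsDomain R]
    {B : Matrix (Fin n) (Fin n) R} (hB : B.IsLowerTriangular) (hdet : B.det ≠ 0) :
    (B * Bᵀ).HasNonzeroLeadingMinors := by
  intro k _ hk
  have hBk : (B.submatrix (Fin.castLE hk) (Fin.castLE hk)).IsLowerTriangular :=
    fun i j hij => hB ((Fin.castLE_lt_castLE_iff hk).2 hij)
  rw [hB.submatrix_castLE_mul_transpose hk, det_mul, det_transpose]
  exact mul_self_ne_zero.2 (hBk.det_ne_zero fun i => hB.diag_ne_zero hdet _)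

end LeadingMinors

open Complex

section Cholesky

variable {n : ℕ}

/-- Extends a Cholesky factor `B` of the upper-left corner of `A` by the last row,
taking the new diagonal entry on the square-root branch through `u`. -/
noncomputable def choleskyStep (u : ℂ) (B : Matrix (Fin n) (Fin n) ℂ)
    (A : Matrix (Fin (n + 1)) (Fin (n + 1)) ℂ) : Matrix (Fin (n + 1)) (Fin (n + 1)) ℂ :=
  let v := B⁻¹ *ᵥ fun j => A (Fin.last n) j.castSucc
  lowerSnoc B v (sqrtNear u (A (Fin.last n) (Fin.last n) - v ⬝ᵥ v))

theorem choleskyStep_mul_transpose {u : ℂ} (hu : u ≠ 0) {B : Matrix (Fin n) (Fin n) ℂ}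
    (hB : IsUnit B.det) {A : Matrix (Fin (n + 1)) (Fin (n + 1)) ℂ} (hA : Aᵀ = A)
    (hBA : B * Bᵀ = A.submatrix Fin.castSucc Fin.castSucc) :
    choleskyStep u B A * (choleskyStep u B A)ᵀ = A := by
  refine lowerSnoc_mul_transpose_eq hA hBA ?_ ?_
  · rw [mulVec_mulVec, mul_nonsing_inv _ hB, one_mulVec]
  · rw [sqrtNear_mul_self hu, add_sub_cancel]

theorem choleskyStep_lowerSnoc_mul_transpose {B : Matrix (Fin n) (Fin n) ℂ} (hB : IsUnit B.det)
    (v : Fin n → ℂ) {b : ℂ} (hb : b ≠ 0) :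
    choleskyStep b B (lowerSnoc B v b * (lowerSnoc B v b)ᵀ) = lowerSnoc B v b := by
  have hrow : (fun j => (lowerSnoc B v b * (lowerSnoc B v b)ᵀ) (Fin.last n) j.castSucc) =
      B *ᵥ v := by
    ext; simp
  rw [choleskyStep, hrow, mulVec_mulVec, nonsing_inv_mul _ hB, one_mulVec,
    lowerSnoc_mul_transpose_last_last, add_sub_cancel_left, sqrtNear_self_mul_self hb]

theorem continuousAt_choleskyStep {u : ℂ} (hu : u ≠ 0) {B₀ : Matrix (Fin n) (Fin n) ℂ}
    (hB₀ : IsUnit B₀.det) {A₀ : Matrix (Fin (n + 1)) (Fin (n + 1)) ℂ}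
    (h₀ : choleskyStep u B₀ A₀ (Fin.last n) (Fin.last n) = u) :
    ContinuousAt (fun x : Matrix (Fin n) (Fin n) ℂ × Matrix (Fin (n + 1)) (Fin (n + 1)) ℂ =>
      choleskyStep u x.1 x.2) (B₀, A₀) := by
  have hinv : ContinuousAt (fun x : Matrix (Fin n) (Fin n) ℂ × _ => x.1⁻¹) (B₀, A₀) := by
    refine (continuousAt_matrix_inv B₀ ?_).comp continuousAt_fst
    rw [Ring.inverse_eq_inv']
    exact continuousAt_inv₀ hB₀.ne_zero
  have hv : ContinuousAt
      (fun x : Matrix (Fin n) (Fin n) ℂ × Matrix (Fin (n + 1)) (Fin (n + 1)) ℂ =>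
        x.1⁻¹ *ᵥ fun j : Fin n => x.2 (Fin.last n) j.castSucc) (B₀, A₀) := by
    fun_prop
  have hc : ContinuousAt
      (fun x : Matrix (Fin n) (Fin n) ℂ × Matrix (Fin (n + 1)) (Fin (n + 1)) ℂ =>
        x.2 (Fin.last n) (Fin.last n) -
          (x.1⁻¹ *ᵥ fun j : Fin n => x.2 (Fin.last n) j.castSucc) ⬝ᵥ
            (x.1⁻¹ *ᵥ fun j : Fin n => x.2 (Fin.last n) j.castSucc)) (B₀, A₀) := by
    fun_prop
  simp only [choleskyStep, lowerSnoc_last_last] at h₀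
  have hb := (continuousAt_sqrtNear hu).comp_of_eq hc
    ((sqrtNear_mul_self hu _).symm.trans (congrArg (fun x => x * x) h₀))
  have := continuous_lowerSnoc.continuousAt.comp (x := (B₀, A₀))
    (continuousAt_fst.prodMk (hv.prodMk hb))
  simpa only [Function.comp_def, choleskyStep] using this

/-- Cholesky factor computed by peeling off the last row; `u i` selects the branch of the
square root giving the `i`-th diagonal entry. -/
noncomputable def cholesky :
    {n : ℕ} → (Fin n → ℂ) → Matrix (Fin n) (Fin n) ℂ → Matrix (Fin n) (Fin n) ℂ
  | 0, _, _ => 1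
  | n + 1, u, A =>
    choleskyStep (u (Fin.last n)) (cholesky (Fin.init u) (A.submatrix Fin.castSucc Fin.castSucc)) A

theorem isLowerTriangular_cholesky (u : Fin n → ℂ) (A : Matrix (Fin n) (Fin n) ℂ) :
    (cholesky u A).IsLowerTriangular := by
  induction n with
  | zero => exact fun i => i.elim0
  | succ n ih => exact isLowerTriangular_lowerSnoc (ih _ _)

theorem cholesky_mul_transpose {u : Fin n → ℂ} (hu : ∀ i, u i ≠ 0)
    {A : Matrix (Fin n) (Fin n) ℂ} (hA : Aᵀ = A) (hA' : A.HasNonzeroLeadingMinors) :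
    cholesky u A * (cholesky u A)ᵀ = A := by
  induction n with
  | zero => exact Subsingleton.elim _ _
  | succ n ih =>
    have hBB := ih (u := Fin.init u) (fun i => hu _) (by rw [transpose_submatrix, hA])
      hA'.submatrix_castSucc
    refine choleskyStep_mul_transpose (hu _) (isUnit_iff_ne_zero.2 fun h => ?_) hA hBB
    refine hA'.submatrix_castSucc.det_ne_zero ?_
    rw [← hBB, det_mul, det_transpose, h, zero_mul]

theorem cholesky_diag_mul_transpose {B : Matrix (Fin n) (Fin n) ℂ}
    (hB : B.IsLowerTriangular) (hdiag : ∀ i, B i i ≠ 0) : cholesky B.diag (B * Bᵀ) = B := by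
  induction n with
  | zero => exact Subsingleton.elim _ _
  | succ n ih =>
    obtain ⟨B, v, b, rfl, hB', hdiag', hb⟩ := hB.exists_eq_lowerSnoc hdiag
    rw [cholesky, init_diag_lowerSnoc, diag_lowerSnoc_last,
      lowerSnoc_mul_transpose_submatrix_castSucc, ih hB' hdiag']
    exact choleskyStep_lowerSnoc_mul_transpose (isUnit_iff_ne_zero.2 (hB'.det_ne_zero hdiag')) v
      hb

theorem continuousAt_cholesky {B : Matrix (Fin n) (Fin n) ℂ}
    (hB : B.IsLowerTriangular) (hdiag : ∀ i, B i i ≠ 0) :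
    ContinuousAt (cholesky B.diag) (B * Bᵀ) := by
  induction n with
  | zero => exact continuousAt_const
  | succ n ih =>
    obtain ⟨B, v, b, rfl, hB', hdiag', hb⟩ := hB.exists_eq_lowerSnoc hdiag
    have hBu : IsUnit B.det := isUnit_iff_ne_zero.2 (hB'.det_ne_zero hdiag')
    have hstep := continuousAt_choleskyStep hb hBu (A₀ := lowerSnoc B v b * (lowerSnoc B v b)ᵀ)
      (by rw [choleskyStep_lowerSnoc_mul_transpose hBu v hb, lowerSnoc_last_last])
    have hcorner : ContinuousAt (fun A => cholesky B.diag (A.submatrix Fin.castSucc Fin.castSucc))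
        (lowerSnoc B v b * (lowerSnoc B v b)ᵀ) :=
      (ih hB' hdiag').comp_of_eq (continuous_id.matrix_submatrix _ _).continuousAt
        (lowerSnoc_mul_transpose_submatrix_castSucc B v b)
    have hfun : cholesky (lowerSnoc B v b).diag = (fun x => choleskyStep b x.1 x.2) ∘
        fun A => (cholesky B.diag (A.submatrix Fin.castSucc Fin.castSucc), A) := by
      ext1 A
      rw [Function.comp_apply, cholesky, init_diag_lowerSnoc, diag_lowerSnoc_last]
    rw [hfun]
    refine hstep.comp_of_eq (hcorner.prodMk continuousAt_id) ?_
    rw [lowerSnoc_mul_transpose_submatrix_castSucc, cholesky_diag_mul_transpose hB' hdiag']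

end Cholesky

section CholeskyCovering

variable {n : ℕ}

abbrev LowerTriangularGL (n : ℕ) : Type :=
  {B : Matrix (Fin n) (Fin n) ℂ // B.IsLowerTriangular ∧ B.det ≠ 0}

abbrev SymmetricLeadingMinors (n : ℕ) : Type :=
  {A : Matrix (Fin n) (Fin n) ℂ // Aᵀ = A ∧ A.HasNonzeroLeadingMinors}

def signDiagonal (d : Fin n → ℤˣ) : Matrix (Fin n) (Fin n) ℂ :=
  diagonal fun i => ((d i : ℤ) : ℂ)

@[simp] theorem signDiagonal_one : signDiagonal (1 : Fin n → ℤˣ) = 1 := by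
  simp [signDiagonal]

theorem signDiagonal_mul (d e : Fin n → ℤˣ) :
    signDiagonal (d * e) = signDiagonal d * signDiagonal e := by
  simp [signDiagonal, diagonal_mul_diagonal]

theorem signDiagonal_mul_self (d : Fin n → ℤˣ) : signDiagonal d * signDiagonal d = 1 := by
  rw [← signDiagonal_mul, show d * d = 1 from funext fun i => Int.units_mul_self (d i),
    signDiagonal_one]

theorem transpose_signDiagonal (d : Fin n → ℤˣ) : (signDiagonal d)ᵀ = signDiagonal d :=
  diagonal_transpose _

theorem signDiagonal_injective : Function.Injective (signDiagonal (n := n)) := by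
  intro d e h
  ext i
  simpa [signDiagonal] using congr_fun₂ h i i

theorem IsLowerTriangular.mul_signDiagonal {B : Matrix (Fin n) (Fin n) ℂ}
    (hB : B.IsLowerTriangular) (d : Fin n → ℤˣ) : (B * signDiagonal d).IsLowerTriangular :=
  hB.mul (blockTriangular_diagonal _)

theorem det_signDiagonal_ne_zero (d : Fin n → ℤˣ) : (signDiagonal d).det ≠ 0 := by
  intro h
  have := congrArg det (signDiagonal_mul_self d)
  rw [det_mul, h, zero_mul, det_one] at this
  exact zero_ne_one this

instance : MulAction (Fin n → ℤˣ) (LowerTriangularGL n) where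
  smul d B := ⟨B.1 * signDiagonal d, B.2.1.mul_signDiagonal d,
    by rw [det_mul]; exact mul_ne_zero B.2.2 (det_signDiagonal_ne_zero d)⟩
  one_smul B := Subtype.ext <| by
    show B.1 * signDiagonal 1 = B.1
    rw [signDiagonal_one, Matrix.mul_one]
  mul_smul d e B := Subtype.ext <| by
    show B.1 * signDiagonal (d * e) = B.1 * signDiagonal e * signDiagonal d
    rw [mul_comm d e, signDiagonal_mul, Matrix.mul_assoc]

@[simp] theorem LowerTriangularGL.coe_smul (d : Fin n → ℤˣ) (B : LowerTriangularGL n) :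
    ((d • B : LowerTriangularGL n) : Matrix (Fin n) (Fin n) ℂ) = B * signDiagonal d :=
  rfl

instance : ContinuousConstSMul (Fin n → ℤˣ) (LowerTriangularGL n) where
  continuous_const_smul _ :=
    (continuous_subtype_val.matrix_mul continuous_const).subtype_mk _

instance : ProperlyDiscontinuousSMul (Fin n → ℤˣ) (LowerTriangularGL n) :=
  ⟨fun _ _ => Set.toFinite _⟩

instance : IsCancelSMul (Fin n → ℤˣ) (LowerTriangularGL n) := by
  refine isCancelSMul_iff_eq_one_of_smul_eq.2 fun d B h => signDiagonal_injective ?_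
  have hB : IsUnit B.1.det := isUnit_iff_ne_zero.2 B.2.2
  calc signDiagonal d = B.1⁻¹ * (B.1 * signDiagonal d) :=
        (nonsing_inv_mul_cancel_left _ _ hB).symm
    _ = 1 := by rw [← LowerTriangularGL.coe_smul, h, nonsing_inv_mul _ hB]
    _ = signDiagonal 1 := signDiagonal_one.symm

theorem isLocallyClosed_setOf_isLowerTriangular_det_ne_zero :
    IsLocallyClosed {B : Matrix (Fin n) (Fin n) ℂ | B.IsLowerTriangular ∧ B.det ≠ 0} := by
  have hclosed : IsClosed {B : Matrix (Fin n) (Fin n) ℂ | B.IsLowerTriangular} := by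
    simp only [IsLowerTriangular, BlockTriangular, Set.ofPred_forall]
    exact isClosed_iInter fun i => isClosed_iInter fun j => isClosed_iInter fun _ =>
      isClosed_eq (continuous_id.matrix_elem i j) continuous_const
  exact hclosed.isLocallyClosed.inter
    (isOpen_compl_singleton.preimage (continuous_id.matrix_det)).isLocallyClosed

instance : LocallyCompactSpace (LowerTriangularGL n) :=
  have : LocallyCompactSpace (Matrix (Fin n) (Fin n) ℂ) :=
    inferInstanceAs (LocallyCompactSpace (Fin n → Fin n → ℂ))
  Topology.IsInducing.subtypeVal.locallyCompactSpace <| by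
    rw [Subtype.range_coe_subtype]
    exact isLocallyClosed_setOf_isLowerTriangular_det_ne_zero

def choleskyMap (B : LowerTriangularGL n) : SymmetricLeadingMinors n :=
  ⟨B.1 * B.1ᵀ, by rw [transpose_mul, transpose_transpose],
    B.2.1.hasNonzeroLeadingMinors_mul_transpose B.2.2⟩

theorem continuous_choleskyMap : Continuous (choleskyMap (n := n)) :=
  (continuous_subtype_val.matrix_mul continuous_subtype_val.matrix_transpose).subtype_mk _

theorem choleskyMap_eq_iff {B C : LowerTriangularGL n} :
    choleskyMap B = choleskyMap C ↔ B ∈ MulAction.orbit (Fin n → ℤˣ) C := by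
  rw [Subtype.ext_iff]
  constructor
  · intro h
    obtain ⟨d, hd⟩ := B.2.1.exists_signs_of_mul_transpose_eq C.2.1 C.2.2 h
    exact ⟨d, Subtype.ext hd.symm⟩
  · rintro ⟨d, rfl⟩
    show C.1 * signDiagonal d * (C.1 * signDiagonal d)ᵀ = C.1 * C.1ᵀ
    rw [transpose_mul, transpose_signDiagonal, Matrix.mul_assoc,
      ← Matrix.mul_assoc (signDiagonal d), signDiagonal_mul_self, Matrix.one_mul]

noncomputable def choleskySection {u : Fin n → ℂ} (hu : ∀ i, u i ≠ 0)
    (A : SymmetricLeadingMinors n) : LowerTriangularGL n :=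
  ⟨cholesky u A.1, isLowerTriangular_cholesky u A.1, fun h => A.2.2.det_ne_zero <| by
    rw [← cholesky_mul_transpose hu A.2.1 A.2.2, det_mul, h, zero_mul]⟩

theorem choleskyMap_choleskySection {u : Fin n → ℂ} (hu : ∀ i, u i ≠ 0)
    (A : SymmetricLeadingMinors n) : choleskyMap (choleskySection hu A) = A :=
  Subtype.ext (cholesky_mul_transpose hu A.2.1 A.2.2)

theorem LowerTriangularGL.diag_ne_zero (B : LowerTriangularGL n) (i : Fin n) : B.1.diag i ≠ 0 :=
  B.2.1.diag_ne_zero B.2.2 i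

theorem choleskySection_choleskyMap (B : LowerTriangularGL n) :
    choleskySection B.diag_ne_zero (choleskyMap B) = B :=
  Subtype.ext (cholesky_diag_mul_transpose B.2.1 B.diag_ne_zero)

theorem continuousAt_choleskySection (B : LowerTriangularGL n) :
    ContinuousAt (choleskySection B.diag_ne_zero) (choleskyMap B) :=
  Topology.IsInducing.subtypeVal.continuousAt_iff.2 <|
    (continuousAt_cholesky B.2.1 B.diag_ne_zero).comp (f := Subtype.val) (x := choleskyMap B)
      continuous_subtype_val.continuousAt

theorem isOpenMap_choleskyMap : IsOpenMap (choleskyMap (n := n)) :=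
  IsOpenMap.of_sections fun B => ⟨choleskySection B.diag_ne_zero, continuousAt_choleskySection B,
    choleskySection_choleskyMap B, choleskyMap_choleskySection _⟩

theorem isQuotientCoveringMap_choleskyMap :
    IsQuotientCoveringMap (choleskyMap (n := n)) (Fin n → ℤˣ) :=
  (isOpenMap_choleskyMap.isQuotientMap continuous_choleskyMap
    (Function.RightInverse.surjective (choleskyMap_choleskySection (u := 1) fun _ => one_ne_zero))
    ).isQuotientCoveringMap_of_properlyDiscontinuousSMul choleskyMap_eq_iff

end CholeskyCovering

end Matrix

theorem cholesky_covering_map_general (m : ℕ) :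
    ∃ p : {B : Matrix (Fin m) (Fin m) ℂ //
            (∀ i j : Fin m, i < j → B i j = 0) ∧ B.det ≠ 0} →
          {A : Matrix (Fin m) (Fin m) ℂ // Aᵀ = A ∧ ∀ k : ℕ, 1 ≤ k → ∀ hk : k ≤ m,
            (A.submatrix (Fin.castLE hk) (Fin.castLE hk)).det ≠ 0},
      (∀ B, (p B : Matrix (Fin m) (Fin m) ℂ) =
        (B : Matrix (Fin m) (Fin m) ℂ) * (B : Matrix (Fin m) (Fin m) ℂ)ᵀ) ∧
      IsCoveringMap p :=
  ⟨choleskyMap, fun _ => rfl, isQuotientCoveringMap_choleskyMap.isCoveringMap⟩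

/-- The map `B ↦ B * Bᵀ` from the space of complex invertible lower triangular
`m × m` matrices to the space of complex symmetric `m × m` matrices all of whose
leading principal minors are nonzero is a covering map. -/
theorem cholesky_covering_map (m : ℕ) (hm : 1 ≤ m) :
    ∃ p : {B : Matrix (Fin m) (Fin m) ℂ //
            (∀ i j : Fin m, i < j → B i j = 0) ∧ B.det ≠ 0} →
          {A : Matrix (Fin m) (Fin m) ℂ // Aᵀ = A ∧ ∀ k : ℕ, 1 ≤ k → ∀ hk : k ≤ m,
            (A.submatrix (Fin.castLE hk) (Fin.castLE hk)).det ≠ 0},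
      (∀ B, (p B : Matrix (Fin m) (Fin m) ℂ) =
        (B : Matrix (Fin m) (Fin m) ℂ) * (B : Matrix (Fin m) (Fin m) ℂ)ᵀ) ∧
      IsCoveringMap p :=
  cholesky_covering_map_general m
end

section
/- Let m ≥ 1, let X be a topological space, and let φ : X → M_m(ℂ) be a continuous map into the space of complex m×m matrices such that for every s ∈ X and every k = 1, …, m, det(φ(s)^{(k)}) ≠ 0. Then there exist continuous maps B, C : X → M_m(ℂ) such that for every s ∈ X, B(s) is lower triangular, C(s) is upper triangular with all diagonal entries equal to 1, and φ(s) = B(s) · C(s). -/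
/-!
Induct on the size. Write `φ s` in block form with leading block `ψ s`, which by induction is
`B' s * C' s`; then `φ s` factors as
`[B' 0; A₂₁ C'⁻¹ S] * [C' B'⁻¹ A₁₂; 0 1]`, with `S = A₂₂ - A₂₁ ψ⁻¹ A₁₂` the Schur complement.
Since `det C' = 1` and `det B' = det ψ ≠ 0`, the inverses, hence all the blocks, depend
continuously on `s`.
-/

open Matrix

namespace Matrix

section Algebra

variable {R : Type*}

theorem fromBlocks_mul_eq_fromBlocks_mul_fromBlocks [CommRing R] {m o : Type*}
    [Fintype m] [DecidableEq m] [Fintype o] [DecidableEq o] {B C : Matrix m m R}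
    (hB : IsUnit B.det) (hC : IsUnit C.det)
    (A₁₂ : Matrix m o R) (A₂₁ : Matrix o m R) (A₂₂ : Matrix o o R) :
    fromBlocks (B * C) A₁₂ A₂₁ A₂₂ =
      fromBlocks B 0 (A₂₁ * C⁻¹) (A₂₂ - A₂₁ * C⁻¹ * (B⁻¹ * A₁₂)) *
        fromBlocks C (B⁻¹ * A₁₂) 0 1 := by
  rw [fromBlocks_multiply]
  simp only [Matrix.mul_zero, Matrix.mul_one, add_zero,
    Matrix.mul_assoc, nonsing_inv_mul _ hC, Matrix.mul_one]
  simp only [← Matrix.mul_assoc, mul_nonsing_inv _ hB, Matrix.one_mul, add_sub_cancel]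

theorem blockTriangular_of_subsingleton [Zero R] {m α : Type*} [Subsingleton m] [Preorder α]
    (M : Matrix m m R) (b : m → α) : M.BlockTriangular b :=
  fun i j h => (h.ne (congrArg b (Subsingleton.elim j i))).elim

variable {m n : ℕ}

theorem isLowerTriangular_reindex_fromBlocks [Zero R] {A : Matrix (Fin m) (Fin m) R}
    {C : Matrix (Fin n) (Fin m) R} {D : Matrix (Fin n) (Fin n) R}
    (hA : A.IsLowerTriangular) (hD : D.IsLowerTriangular) :
    (reindex finSumFinEquiv finSumFinEquiv (fromBlocks A 0 C D)).IsLowerTriangular := by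
  rw [IsLowerTriangular, blockTriangular_reindex_iff]
  rintro (i | i) (j | j) hij
  · exact hA ((Fin.strictMono_castAdd n).lt_iff_lt.mp hij)
  · rfl
  · simp [Fin.lt_def] at hij; omega
  · exact hD (by simpa using hij)

theorem isUpperTriangular_reindex_fromBlocks [Zero R] {A : Matrix (Fin m) (Fin m) R}
    {B : Matrix (Fin m) (Fin n) R} {D : Matrix (Fin n) (Fin n) R}
    (hA : A.IsUpperTriangular) (hD : D.IsUpperTriangular) :
    (reindex finSumFinEquiv finSumFinEquiv (fromBlocks A B 0 D)).IsUpperTriangular := by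
  rw [IsUpperTriangular, blockTriangular_reindex_iff]
  rintro (i | i) (j | j) hij
  · exact hA ((Fin.strictMono_castAdd n).lt_iff_lt.mp hij)
  · simp [Fin.lt_def] at hij; omega
  · rfl
  · exact hD (by simpa using hij)

theorem reindex_fromBlocks_apply_self_eq_one [One R] {l m n : Type*} (e : m ⊕ n ≃ l)
    {A : Matrix m m R} {B : Matrix m n R} {C : Matrix n m R} {D : Matrix n n R}
    (hA : ∀ i, A i i = 1) (hD : ∀ i, D i i = 1) (i : l) :
    reindex e e (fromBlocks A B C D) i i = 1 := by
  obtain ⟨i, rfl⟩ := e.surjective i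
  rcases i with i | i <;> simp [hA, hD]

theorem toBlocks₁₁_reindex_finSumFinEquiv_symm (M : Matrix (Fin (m + n)) (Fin (m + n)) R) :
    (reindex finSumFinEquiv.symm finSumFinEquiv.symm M).toBlocks₁₁ =
      M.submatrix (Fin.castAdd n) (Fin.castAdd n) := by
  ext i j; simp [toBlocks₁₁]

end Algebra

end Matrix

section ContinuousLU

variable {X 𝕜 : Type*} [TopologicalSpace X] [Field 𝕜] [TopologicalSpace 𝕜]
  [IsTopologicalDivisionRing 𝕜]

theorem Continuous.matrix_inv {n : Type*} [Fintype n] [DecidableEq n]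
    {M : X → Matrix n n 𝕜} (hM : Continuous M) (h : ∀ s, (M s).det ≠ 0) :
    Continuous fun s => (M s)⁻¹ := by
  simp_rw [inv_def, Ring.inverse_eq_inv']
  exact (hM.matrix_det.inv₀ h).smul hM.matrix_adjugate

def HasContinuousLU {ι : Type*} [Fintype ι] [LT ι] (φ : X → Matrix ι ι 𝕜) : Prop :=
  ∃ B C : X → Matrix ι ι 𝕜, Continuous B ∧ Continuous C ∧
    ∀ s, (B s).IsLowerTriangular ∧ (C s).IsUpperTriangular ∧ (∀ i, C s i i = 1) ∧
      φ s = B s * C s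

theorem HasContinuousLU.of_succ {n : ℕ} {φ : X → Matrix (Fin (n + 1)) (Fin (n + 1)) 𝕜}
    (hφ : Continuous φ) (hLU : HasContinuousLU fun s => (φ s).submatrix Fin.castSucc Fin.castSucc)
    (hdet : ∀ s, ((φ s).submatrix Fin.castSucc Fin.castSucc).det ≠ 0) :
    HasContinuousLU φ := by
  let e : Fin n ⊕ Fin 1 ≃ Fin (n + 1) := finSumFinEquiv
  let N s := reindex e.symm e.symm (φ s)
  have hN : Continuous N := hφ.matrix_reindex _ _
  have hN₁₁ (s : X) : (N s).toBlocks₁₁ = (φ s).submatrix Fin.castSucc Fin.castSucc :=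
    toBlocks₁₁_reindex_finSumFinEquiv_symm _
  simp only [← hN₁₁] at hLU hdet
  obtain ⟨B', C', hB', hC', hBC'⟩ := hLU
  have hψ (s : X) : (N s).toBlocks₁₁ = B' s * C' s := (hBC' s).2.2.2
  have hC'det (s : X) : (C' s).det = 1 := by
    obtain ⟨-, hup, hdiag, -⟩ := hBC' s
    simp [det_of_isUpperTriangular hup, hdiag]
  have hB'det (s : X) : (B' s).det ≠ 0 := by
    simpa [hψ, hC'det] using hdet s
  have hC'inv := hC'.matrix_inv fun s => (hC'det s).symm ▸ one_ne_zero
  have hB'inv := hB'.matrix_inv hB'det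
  have hN₁₂ : Continuous fun s => (N s).toBlocks₁₂ :=
    continuous_matrix fun _ _ => hN.matrix_elem _ _
  have hN₂₁ : Continuous fun s => (N s).toBlocks₂₁ :=
    continuous_matrix fun _ _ => hN.matrix_elem _ _
  have hN₂₂ : Continuous fun s => (N s).toBlocks₂₂ :=
    continuous_matrix fun _ _ => hN.matrix_elem _ _
  refine ⟨fun s => reindex e e (fromBlocks (B' s) 0 ((N s).toBlocks₂₁ * (C' s)⁻¹)
      ((N s).toBlocks₂₂ - (N s).toBlocks₂₁ * (C' s)⁻¹ * ((B' s)⁻¹ * (N s).toBlocks₁₂))),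
    fun s => reindex e e (fromBlocks (C' s) ((B' s)⁻¹ * (N s).toBlocks₁₂) 0 1),
    ((hB'.matrix_fromBlocks continuous_const (hN₂₁.matrix_mul hC'inv)
      (hN₂₂.sub ((hN₂₁.matrix_mul hC'inv).matrix_mul (hB'inv.matrix_mul hN₁₂)))).matrix_reindex
        _ _),
    ((hC'.matrix_fromBlocks (hB'inv.matrix_mul hN₁₂) continuous_const
      continuous_const).matrix_reindex _ _),
    fun s => ⟨?_, ?_, ?_, ?_⟩⟩
  · exact isLowerTriangular_reindex_fromBlocks (hBC' s).1 (blockTriangular_of_subsingleton _ _)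
  · exact isUpperTriangular_reindex_fromBlocks (hBC' s).2.1 (blockTriangular_of_subsingleton _ _)
  · exact reindex_fromBlocks_apply_self_eq_one e (hBC' s).2.2.1 one_apply_eq
  · calc φ s = reindex e e (fromBlocks (N s).toBlocks₁₁ (N s).toBlocks₁₂ (N s).toBlocks₂₁
          (N s).toBlocks₂₂) := by rw [fromBlocks_toBlocks]; simp [N]
      _ = _ := by
        rw [hψ, fromBlocks_mul_eq_fromBlocks_mul_fromBlocks (hB'det s).isUnit
          ((hC'det s).symm ▸ isUnit_one)]
        simp only [reindex_apply, submatrix_mul_equiv]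

theorem hasContinuousLU_of_det_submatrix_castLE_ne_zero :
    ∀ {n : ℕ} {φ : X → Matrix (Fin n) (Fin n) 𝕜}, Continuous φ →
      (∀ s k (hk : k ≤ n), ((φ s).submatrix (Fin.castLE hk) (Fin.castLE hk)).det ≠ 0) →
      HasContinuousLU φ
  | 0, _, _, _ => ⟨1, 1, continuous_const, continuous_const, fun _ =>
      ⟨fun i => i.elim0, fun i => i.elim0, fun i => i.elim0, Subsingleton.elim _ _⟩⟩
  | n + 1, φ, hφ, hdet => by
    refine .of_succ hφ (hasContinuousLU_of_det_submatrix_castLE_ne_zero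
      (hφ.matrix_submatrix _ _) fun s k hk => ?_) fun s => ?_
    · rw [submatrix_submatrix]
      exact hdet s k (hk.trans n.le_succ)
    · exact hdet s n n.le_succ

end ContinuousLU

theorem continuous_lu_decomposition_general (m : ℕ)
    (X : Type*) [TopologicalSpace X]
    (φ : X → Matrix (Fin m) (Fin m) ℂ) (hφ : Continuous φ)
    (hdet : ∀ s : X, ∀ k : ℕ, 1 ≤ k → ∀ hk : k ≤ m,
      ((φ s).submatrix (Fin.castLE hk) (Fin.castLE hk)).det ≠ 0) :
    ∃ B C : X → Matrix (Fin m) (Fin m) ℂ,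
      Continuous B ∧ Continuous C ∧
      ∀ s : X,
        (∀ i j : Fin m, i < j → B s i j = 0) ∧
        (∀ i j : Fin m, j < i → C s i j = 0) ∧
        (∀ i : Fin m, C s i i = 1) ∧
        φ s = B s * C s := by
  obtain ⟨B, C, hB, hC, hBC⟩ := hasContinuousLU_of_det_submatrix_castLE_ne_zero hφ fun s k hk => by
    rcases Nat.eq_zero_or_pos k with rfl | hk₀
    · simp
    · exact hdet s k hk₀ hk
  exact ⟨B, C, hB, hC, fun s => ⟨fun i j => @(hBC s).1 i j, fun i j => @(hBC s).2.1 i j,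
    (hBC s).2.2⟩⟩

/-- **Continuous LU decomposition in families.** If `φ : X → M_m(ℂ)` is a continuous
family of matrices all of whose leading principal minors are nonzero, then there are
continuous families `B` (lower triangular) and `C` (upper triangular with unit
diagonal) with `φ s = B s * C s` for all `s`. -/
theorem continuous_lu_decomposition (m : ℕ) (hm : 1 ≤ m)
    (X : Type*) [TopologicalSpace X]
    (φ : X → Matrix (Fin m) (Fin m) ℂ) (hφ : Continuous φ)
    (hdet : ∀ s : X, ∀ k : ℕ, 1 ≤ k → ∀ hk : k ≤ m,
      ((φ s).submatrix (Fin.castLE hk) (Fin.castLE hk)).det ≠ 0) :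
    ∃ B C : X → Matrix (Fin m) (Fin m) ℂ,
      Continuous B ∧ Continuous C ∧
      ∀ s : X,
        (∀ i j : Fin m, i < j → B s i j = 0) ∧
        (∀ i j : Fin m, j < i → C s i j = 0) ∧
        (∀ i : Fin m, C s i i = 1) ∧
        φ s = B s * C s :=
  continuous_lu_decomposition_general m X φ hφ hdet
end

section
/- Let m ≥ 1, let X be a locally path-connected and simply connected topological space, and let φ : X → M_m(ℂ) be a continuous map into the space of complex m×m matrices such that for every s ∈ X, φ(s) is symmetric and det(φ(s)^{(k)}) ≠ 0 for every k = 1, …, m. Then there exists a continuous map B : X → M_m(ℂ) such that for every s ∈ X, B(s) is lower triangular and φ(s) = B(s) · B(s)ᵀ. -/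
/-!
Induction on `m`, bordering a Cholesky factor of the leading `(m-1)×(m-1)` block. If
`φ = [[A, v], [vᵀ, d]]` and `A = B Bᵀ` with `B` lower triangular, then `B` is invertible and,
with `w = B⁻¹ v`, the matrix `[[B, 0], [wᵀ, β]]` is a lower triangular factor of `φ` as soon as
`β² = d - w ⬝ w`. Taking `β = 0` would make `det φ = 0`, so `d - w ⬝ w` never vanishes; on a simply
connected, locally path-connected space it therefore has a continuous square root, obtained by
lifting through the covering map `z ↦ z²` of `ℂ \ {0}`.
-/

open Matrix

theorem exists_continuous_sq_eq {X : Type*} [TopologicalSpace X] [LocallyPathConnectedSpace X]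
    [SimplyConnectedSpace X] {f : X → ℂ} (hf : Continuous f) (hf0 : ∀ x, f x ≠ 0) :
    ∃ g : X → ℂ, Continuous g ∧ ∀ x, g x ^ 2 = f x := by
  obtain ⟨x₀⟩ : Nonempty X := inferInstance
  obtain ⟨z₀, hz₀⟩ := IsAlgClosed.exists_pow_nat_eq (f x₀) two_pos
  obtain ⟨g, ⟨-, hg⟩, -⟩ := (isCoveringMapOn_npow 2 two_ne_zero).existsUnique_continuousMap_lifts
    ⟨f, hf⟩ hz₀ hf0
  exact ⟨g, g.continuous, congrFun hg⟩

namespace Matrix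

variable {R : Type*} {n : ℕ}

/-- The bordered matrix `[[B, 0], [wᵀ, β]]`. -/
def borderedLower [Zero R] (B : Matrix (Fin n) (Fin n) R) (w : Fin n → R) (β : R) :
    Matrix (Fin (n + 1)) (Fin (n + 1)) R :=
  of (Fin.snoc (fun i => Fin.snoc (B i) 0) (Fin.snoc w β))

section Zero

variable [Zero R] (B : Matrix (Fin n) (Fin n) R) (w : Fin n → R) (β : R)

@[simp] theorem borderedLower_castSucc_castSucc (i j : Fin n) :
    borderedLower B w β i.castSucc j.castSucc = B i j := by
  simp [borderedLower]

@[simp] theorem borderedLower_castSucc_last (i : Fin n) :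
    borderedLower B w β i.castSucc (Fin.last n) = 0 := by
  simp [borderedLower]

@[simp] theorem borderedLower_last_castSucc (j : Fin n) :
    borderedLower B w β (Fin.last n) j.castSucc = w j := by
  simp [borderedLower]

@[simp] theorem borderedLower_last_last :
    borderedLower B w β (Fin.last n) (Fin.last n) = β := by
  simp [borderedLower]

variable {B} in
theorem borderedLower_eq_zero_of_lt (hB : ∀ i j, i < j → B i j = 0) {i j : Fin (n + 1)}
    (hij : i < j) : borderedLower B w β i j = 0 := by
  induction i using Fin.lastCases with
  | last => exact absurd hij (Fin.le_last j).not_gt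
  | cast i =>
    induction j using Fin.lastCases with
    | last => simp
    | cast j => simpa using hB i j (Fin.castSucc_lt_castSucc_iff.mp hij)

end Zero

theorem _root_.Continuous.matrix_borderedLower {X : Type*} [TopologicalSpace X] [Zero R]
    [TopologicalSpace R] {B : X → Matrix (Fin n) (Fin n) R} {w : X → Fin n → R} {β : X → R}
    (hB : Continuous B) (hw : Continuous w) (hβ : Continuous β) :
    Continuous fun x => borderedLower (B x) (w x) (β x) := by
  unfold borderedLower
  fun_prop

variable [CommRing R]

theorem det_borderedLower_zero (B : Matrix (Fin n) (Fin n) R) (w : Fin n → R) :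
    (borderedLower B w 0).det = 0 :=
  det_eq_zero_of_column_eq_zero (Fin.last n) fun i => by
    induction i using Fin.lastCases <;> simp

theorem eq_borderedLower_mul_transpose {ψ : Matrix (Fin (n + 1)) (Fin (n + 1)) R}
    (hψ : ψᵀ = ψ) {B : Matrix (Fin n) (Fin n) R}
    (hB : ψ.submatrix Fin.castSucc Fin.castSucc = B * Bᵀ) {w : Fin n → R}
    (hw : B *ᵥ w = fun i => ψ i.castSucc (Fin.last n)) {β : R}
    (hβ : ψ (Fin.last n) (Fin.last n) = w ⬝ᵥ w + β ^ 2) :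
    ψ = borderedLower B w β * (borderedLower B w β)ᵀ := by
  have hcol (i : Fin n) : ψ i.castSucc (Fin.last n) = ∑ k, B i k * w k := by
    rw [← congrFun hw i]; rfl
  ext i j
  induction i using Fin.lastCases with
  | last =>
    induction j using Fin.lastCases with
    | last => simp [mul_apply, Fin.sum_univ_castSucc, hβ, dotProduct, sq]
    | cast j =>
      rw [← hψ]
      simp [mul_apply, Fin.sum_univ_castSucc, hcol, mul_comm]
  | cast i =>
    induction j using Fin.lastCases with
    | last => simp [mul_apply, Fin.sum_univ_castSucc, hcol]
    | cast j => simpa [mul_apply, Fin.sum_univ_castSucc] using congrFun (congrFun hB i) j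

theorem sub_dotProduct_ne_zero_of_det_ne_zero {ψ : Matrix (Fin (n + 1)) (Fin (n + 1)) R}
    (hψ : ψᵀ = ψ) {B : Matrix (Fin n) (Fin n) R}
    (hB : ψ.submatrix Fin.castSucc Fin.castSucc = B * Bᵀ) {w : Fin n → R}
    (hw : B *ᵥ w = fun i => ψ i.castSucc (Fin.last n)) (hdet : ψ.det ≠ 0) :
    ψ (Fin.last n) (Fin.last n) - w ⬝ᵥ w ≠ 0 := by
  intro hδ
  apply hdet
  rw [eq_borderedLower_mul_transpose hψ hB hw (β := 0) (by linear_combination hδ),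
    det_mul, det_borderedLower_zero, zero_mul]

end Matrix

theorem exists_continuous_cholesky {X : Type*} [TopologicalSpace X] [LocallyPathConnectedSpace X]
    [SimplyConnectedSpace X] {n : ℕ} (ψ : X → Matrix (Fin n) (Fin n) ℂ) (hψ : Continuous ψ)
    (hsym : ∀ s, (ψ s)ᵀ = ψ s)
    (hdet : ∀ s k (hk : k ≤ n), ((ψ s).submatrix (Fin.castLE hk) (Fin.castLE hk)).det ≠ 0) :
    ∃ B : X → Matrix (Fin n) (Fin n) ℂ, Continuous B ∧
      ∀ s, (∀ i j : Fin n, i < j → B s i j = 0) ∧ ψ s = B s * (B s)ᵀ := by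
  induction n with
  | zero => exact ⟨0, continuous_const, fun s => ⟨nofun, Subsingleton.elim _ _⟩⟩
  | succ n ih =>
    set A := fun s => (ψ s).submatrix Fin.castSucc Fin.castSucc
    obtain ⟨B, hBc, hB⟩ := ih A (hψ.matrix_submatrix _ _)
      (fun s => by simp only [A, transpose_submatrix, hsym])
      (fun s k hk => hdet s k (hk.trans n.le_succ))
    have hBdet (s : X) : (B s).det ≠ 0 := by
      have hA : (A s).det ≠ 0 := hdet s n n.le_succ
      rwa [(hB s).2, det_mul, det_transpose, mul_self_ne_zero] at hA
    set v := fun s i => ψ s (Fin.castSucc i) (Fin.last n)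
    set w := fun s => (B s)⁻¹ *ᵥ v s
    have hw (s : X) : B s *ᵥ w s = v s := by
      simp only [w, mulVec_mulVec, mul_nonsing_inv _ (isUnit_iff_ne_zero.mpr (hBdet s)),
        one_mulVec]
    have hwc : Continuous w := by
      have hBinv : Continuous fun s => (B s)⁻¹ := continuous_iff_continuousAt.2 fun s =>
        (continuousAt_matrix_inv _ (by
          simpa only [Ring.inverse_eq_inv'] using continuousAt_inv₀ (hBdet s))).comp
          hBc.continuousAt
      exact hBinv.matrix_mulVec (by fun_prop)
    obtain ⟨β, hβc, hβ⟩ := exists_continuous_sq_eq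
      (f := fun s => ψ s (Fin.last n) (Fin.last n) - w s ⬝ᵥ w s) (by fun_prop)
      fun s => sub_dotProduct_ne_zero_of_det_ne_zero (hsym s) (hB s).2 (hw s)
        (hdet s (n + 1) le_rfl)
    refine ⟨fun s => borderedLower (B s) (w s) (β s), hBc.matrix_borderedLower hwc hβc,
      fun s => ⟨fun i j => borderedLower_eq_zero_of_lt _ _ (hB s).1,
        eq_borderedLower_mul_transpose (hsym s) (hB s).2 (hw s) (by rw [hβ]; ring)⟩⟩

theorem continuous_cholesky_simply_connected_general (m : ℕ)
    (X : Type*) [TopologicalSpace X] [LocallyPathConnectedSpace X]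
    [SimplyConnectedSpace X]
    (φ : X → Matrix (Fin m) (Fin m) ℂ) (hφ : Continuous φ)
    (hsym : ∀ s : X, (φ s)ᵀ = φ s)
    (hdet : ∀ s : X, ∀ k : ℕ, 1 ≤ k → ∀ hk : k ≤ m,
      ((φ s).submatrix (Fin.castLE hk) (Fin.castLE hk)).det ≠ 0) :
    ∃ B : X → Matrix (Fin m) (Fin m) ℂ,
      Continuous B ∧
      ∀ s : X, (∀ i j : Fin m, i < j → B s i j = 0) ∧ φ s = B s * (B s)ᵀ := by
  refine exists_continuous_cholesky φ hφ hsym fun s k hk => ?_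
  rcases k.eq_zero_or_pos with rfl | hk₁
  · simp
  · exact hdet s k hk₁ hk

/-- **Continuous Cholesky factorization over a simply connected base.** If `X` is
locally path-connected and simply connected and `φ : X → M_m(ℂ)` is a continuous
family of symmetric matrices all of whose leading principal minors are nonzero, then
there is a continuous family `B` of lower triangular matrices with
`φ s = B s * (B s)ᵀ` for all `s`. -/
theorem continuous_cholesky_simply_connected (m : ℕ) (hm : 1 ≤ m)
    (X : Type*) [TopologicalSpace X] [LocallyPathConnectedSpace X]
    [SimplyConnectedSpace X]
    (φ : X → Matrix (Fin m) (Fin m) ℂ) (hφ : Continuous φ)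
    (hsym : ∀ s : X, (φ s)ᵀ = φ s)
    (hdet : ∀ s : X, ∀ k : ℕ, 1 ≤ k → ∀ hk : k ≤ m,
      ((φ s).submatrix (Fin.castLE hk) (Fin.castLE hk)).det ≠ 0) :
    ∃ B : X → Matrix (Fin m) (Fin m) ℂ,
      Continuous B ∧
      ∀ s : X, (∀ i j : Fin m, i < j → B s i j = 0) ∧ φ s = B s * (B s)ᵀ :=
  continuous_cholesky_simply_connected_general m X φ hφ hsym hdet
end
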